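/- arXiv:1907.09302 — 3 statements merged into one kernel-verified Lean document; each statement's English description precedes it below -/
import Mathlib

section
/- Let $N \geq 2$, $s \in (0,1)$, and let $M : [0,\infty) \to \mathbb{R}$ be continuous with $M(t) \geq 0$ for all $t \geq 0$. If the function $t \mapsto M(t)/t^{2s/(N-2s)}$ is nonincreasing on $(0,\infty)$, then the function $t \mapsto \widehat{M}(t) - (1 - \tfrac{2s}{N}) M(t) t$ is nondecreasing on $[0,\infty)$, where $\widehat{M}(t) := \int_0^t M(\tau)\,d\tau$. -/
/-!
With `θ = 2s/(N - 2s)` one has `1 - 2s/N = 1/(θ + 1)`. For `0 ≤ a < b` put `C = M b / b^θ`;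
monotonicity of `M t / t^θ` gives `M ≥ C t^θ` on `(0, b]`, so
`∫_a^b M ≥ C (b^(θ+1) - a^(θ+1))/(θ+1) = (M b b - C a^(θ+1))/(θ+1)`, and `C a^(θ+1) ≤ M a a`.
-/

open MeasureTheory Set

section AntitoneDivRpow

variable {M : ℝ → ℝ} {θ : ℝ}

lemma mul_rpow_le_of_antitoneOn_div_rpow
    (hM : AntitoneOn (fun t => M t / t ^ θ) (Ioi 0)) {x b : ℝ} (hx : 0 < x) (hxb : x ≤ b) :
    M b / b ^ θ * x ^ θ ≤ M x := by
  have hxθ : 0 < x ^ θ := Real.rpow_pos_of_pos hx θ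
  calc M b / b ^ θ * x ^ θ ≤ M x / x ^ θ * x ^ θ :=
        mul_le_mul_of_nonneg_right (hM hx (hx.trans_le hxb) hxb) hxθ.le
    _ = M x := div_mul_cancel₀ _ hxθ.ne'

lemma mul_rpow_add_one_le_of_antitoneOn_div_rpow
    (hM : AntitoneOn (fun t => M t / t ^ θ) (Ioi 0)) {a b : ℝ} (ha : 0 ≤ a) (hab : a ≤ b)
    (hθ : θ + 1 ≠ 0) :
    M b / b ^ θ * a ^ (θ + 1) ≤ M a * a := by
  rcases ha.eq_or_lt with rfl | ha
  · simp [Real.zero_rpow hθ]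
  rw [Real.rpow_add_one ha.ne', ← mul_assoc]
  exact mul_le_mul_of_nonneg_right (mul_rpow_le_of_antitoneOn_div_rpow hM ha hab) ha.le

lemma integral_ge_of_antitoneOn_div_rpow (hMc : Continuous M)
    (hM : AntitoneOn (fun t => M t / t ^ θ) (Ioi 0)) (hθ : -1 < θ) {a b : ℝ} (ha : 0 ≤ a)
    (hab : a ≤ b) :
    M b / b ^ θ * ((b ^ (θ + 1) - a ^ (θ + 1)) / (θ + 1)) ≤ ∫ x in a..b, M x := by
  rw [← integral_rpow (Or.inl hθ), ← intervalIntegral.integral_const_mul]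
  refine intervalIntegral.integral_mono_on_of_le_Ioo hab
    ((intervalIntegral.intervalIntegrable_rpow' hθ).const_mul _) (hMc.intervalIntegrable a b)
    fun x hx => mul_rpow_le_of_antitoneOn_div_rpow hM (ha.trans_lt hx.1) hx.2.le

theorem monotoneOn_integral_sub_div_of_antitoneOn_div_rpow (hMc : Continuous M)
    (hM : AntitoneOn (fun t => M t / t ^ θ) (Ioi 0)) (hθ : -1 < θ) :
    MonotoneOn (fun t => (∫ τ in (0:ℝ)..t, M τ) - (θ + 1)⁻¹ * M t * t) (Ici 0) := by
  intro a ha b _ hab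
  have hθ1 : 0 < θ + 1 := by linarith
  have hsplit : (∫ τ in (0:ℝ)..b, M τ) = (∫ τ in (0:ℝ)..a, M τ) + ∫ τ in a..b, M τ :=
    (intervalIntegral.integral_add_adjacent_intervals (hMc.intervalIntegrable 0 a)
      (hMc.intervalIntegrable a b)).symm
  have hendpoint := mul_rpow_add_one_le_of_antitoneOn_div_rpow hM ha hab hθ1.ne'
  have hb_rpow : M b / b ^ θ * b ^ (θ + 1) = M b * b := by
    rcases (ha.trans hab : (0:ℝ) ≤ b).eq_or_lt with rfl | hb
    · simp [Real.zero_rpow hθ1.ne']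
    have hbθ : 0 < b ^ θ := Real.rpow_pos_of_pos hb θ
    rw [Real.rpow_add_one hb.ne']
    field_simp
  have hincrement : (θ + 1)⁻¹ * (M b * b - M a * a) ≤ ∫ τ in a..b, M τ :=
    calc (θ + 1)⁻¹ * (M b * b - M a * a)
        ≤ (θ + 1)⁻¹ * (M b * b - M b / b ^ θ * a ^ (θ + 1)) := by gcongr
      _ = M b / b ^ θ * ((b ^ (θ + 1) - a ^ (θ + 1)) / (θ + 1)) := by rw [← hb_rpow]; ring
      _ ≤ ∫ τ in a..b, M τ := integral_ge_of_antitoneOn_div_rpow hMc hM hθ ha hab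
  simp only [hsplit]
  linarith

end AntitoneDivRpow

theorem stmt0_general (N : ℕ) (hN : 2 ≤ N) (s : ℝ)
    (h2s : 2 * s < N) (M : ℝ → ℝ) (hMc : Continuous M)
    (hM5 : AntitoneOn (fun t => M t / t ^ (2 * s / ((N:ℝ) - 2 * s))) (Ioi (0:ℝ))) :
    MonotoneOn (fun t => (∫ τ in (0:ℝ)..t, M τ) - (1 - 2 * s / (N:ℝ)) * M t * t)
      (Ici (0:ℝ)) := by
  have hN0 : (0:ℝ) < N := by exact_mod_cast (by omega : 0 < N)
  have hNs : (0:ℝ) < N - 2 * s := by linarith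
  have hθ : -1 < 2 * s / ((N:ℝ) - 2 * s) := by
    rw [lt_div_iff₀ hNs]
    linarith
  have hc : 1 - 2 * s / (N:ℝ) = (2 * s / ((N:ℝ) - 2 * s) + 1)⁻¹ := by
    rw [div_add_one hNs.ne', inv_div, add_sub_cancel]
    field_simp [hN0.ne']
  rw [hc]
  exact monotoneOn_integral_sub_div_of_antitoneOn_div_rpow hMc hM5 hθ

/-- (M5) implies (M6) for Kirchhoff functions. -/
theorem stmt0 (N : ℕ) (hN : 2 ≤ N) (s : ℝ) (hs0 : 0 < s) (hs1 : s < 1)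
    (h2s : 2 * s < N) (M : ℝ → ℝ) (hMc : Continuous M)
    (hM0 : ∀ t ≥ (0:ℝ), 0 ≤ M t)
    (hM5 : AntitoneOn (fun t => M t / t ^ (2 * s / ((N:ℝ) - 2 * s))) (Ioi (0:ℝ))) :
    MonotoneOn (fun t => (∫ τ in (0:ℝ)..t, M τ) - (1 - 2 * s / (N:ℝ)) * M t * t)
      (Ici (0:ℝ)) :=
  stmt0_general N hN s h2s M hMc hM5
end

section
/- Let $N \geq 2$, $s \in (0,1)$ with $2s < N$, and let $M : [0,\infty) \to \mathbb{R}$ be continuous with $M(t) \geq 0$. If $t \mapsto \widehat{M}(t) - (1 - \tfrac{2s}{N}) M(t) t$ is nondecreasing on $[0,\infty)$, where $\widehat{M}(t) := \int_0^t M(\tau)\,d\tau$, then $t \mapsto M(t)/t^{2s/(N-2s)}$ is nonincreasing on $(0,\infty)$. -/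
open MeasureTheory Set

/-!
Write `f t = M t / t ^ α`, where `θ (α + 1) = 1`. Given `a < b`, let `c ∈ [a, b]` maximise `f` on
`[a, b]` and put `K = f c`, so that `M t ≤ K t ^ α` on `[a, c]` with equality at `c`. Monotonicity
of `∫₀ᵗ M - θ t M t` bounds `θ (c M c - a M a)` by `∫ₐᶜ M ≤ K (c ^ (α+1) - a ^ (α+1)) / (α+1)`, and
since `1 / (α + 1) = θ` this leaves `K a ^ (α + 1) ≤ a M a`, i.e. `f b ≤ K ≤ f a`.
-/

variable {M : ℝ → ℝ} {θ α : ℝ}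

lemma integral_le_of_le_const_mul_rpow {a c K : ℝ} (hac : a ≤ c) (hα : -1 < α)
    (hM : ContinuousOn M (Icc a c)) (hle : ∀ t ∈ Icc a c, M t ≤ K * t ^ α) :
    ∫ t in a..c, M t ≤ K * ((c ^ (α + 1) - a ^ (α + 1)) / (α + 1)) := by
  rw [← integral_rpow (Or.inl hα), ← intervalIntegral.integral_const_mul]
  exact intervalIntegral.integral_mono_on hac (hM.intervalIntegrable_of_Icc hac)
    ((intervalIntegral.intervalIntegrable_rpow' hα).const_mul K) hle

lemma mul_sub_le_integral_of_monotoneOn (hM : ContinuousOn M (Ici 0))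
    (hmono : MonotoneOn (fun t => (∫ τ in (0:ℝ)..t, M τ) - θ * M t * t) (Ici 0))
    {a c : ℝ} (ha : 0 ≤ a) (hac : a ≤ c) :
    θ * (M c * c - M a * a) ≤ ∫ t in a..c, M t := by
  have hint : ∀ x, 0 ≤ x → IntervalIntegrable M volume 0 x := fun x hx =>
    (hM.mono Icc_subset_Ici_self).intervalIntegrable_of_Icc hx
  rw [← intervalIntegral.integral_interval_sub_left (hint c (ha.trans hac)) (hint a ha)]
  linarith [hmono (mem_Ici.2 ha) (mem_Ici.2 (ha.trans hac)) hac]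

lemma const_mul_rpow_le_of_monotoneOn (hM : ContinuousOn M (Ici 0)) (hθ : 0 < θ)
    (hθα : θ * (α + 1) = 1)
    (hmono : MonotoneOn (fun t => (∫ τ in (0:ℝ)..t, M τ) - θ * M t * t) (Ici 0))
    {a c K : ℝ} (ha : 0 < a) (hac : a ≤ c) (hc : M c = K * c ^ α)
    (hle : ∀ t ∈ Icc a c, M t ≤ K * t ^ α) :
    K * a ^ α ≤ M a := by
  have hα : -1 < α := by nlinarith
  have hc0 : c ≠ 0 := (ha.trans_le hac).ne'
  have hupper := integral_le_of_le_const_mul_rpow hac hα (hM.mono fun t ht => ha.le.trans ht.1) hle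
  have hlower := mul_sub_le_integral_of_monotoneOn hM hmono ha.le hac
  have hdiv : ∀ x : ℝ, x / (α + 1) = θ * x := fun x => by
    rw [div_eq_iff (by linarith), mul_assoc, mul_comm x, ← mul_assoc, hθα, one_mul]
  rw [hdiv, Real.rpow_add_one hc0, Real.rpow_add_one ha.ne'] at hupper
  rw [hc] at hlower
  have hθa : 0 < θ * a := mul_pos hθ ha
  have hprod : θ * a * (K * a ^ α - M a) ≤ 0 := by linarith
  exact sub_nonpos.1 (nonpos_of_mul_nonpos_right hprod hθa)

theorem antitoneOn_div_rpow_of_monotoneOn (hM : ContinuousOn M (Ici 0)) (hθ : 0 < θ)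
    (hθα : θ * (α + 1) = 1)
    (hmono : MonotoneOn (fun t => (∫ τ in (0:ℝ)..t, M τ) - θ * M t * t) (Ici 0)) :
    AntitoneOn (fun t => M t / t ^ α) (Ioi 0) := by
  intro a ha b _ hab
  have hpos : ∀ t ∈ Icc a b, 0 < t := fun t ht => lt_of_lt_of_le ha ht.1
  have hcont : ContinuousOn (fun t => M t / t ^ α) (Icc a b) :=
    (hM.mono fun t ht => (hpos t ht).le).div
      (continuousOn_id.rpow_const fun t ht => Or.inl (hpos t ht).ne')
      fun t ht => (Real.rpow_pos_of_pos (hpos t ht) α).ne'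
  obtain ⟨c, ⟨hac, hcb⟩, hcmax⟩ := isCompact_Icc.exists_isMaxOn (nonempty_Icc.2 hab) hcont
  have hcα := (Real.rpow_pos_of_pos (hpos c ⟨hac, hcb⟩) α).ne'
  have hKa : M c / c ^ α * a ^ α ≤ M a := by
    refine const_mul_rpow_le_of_monotoneOn hM hθ hθα hmono ha hac (by field_simp) fun t ht => ?_
    exact (div_le_iff₀ (Real.rpow_pos_of_pos (hpos t ⟨ht.1, ht.2.trans hcb⟩) α)).1
      (hcmax ⟨ht.1, ht.2.trans hcb⟩)
  calc M b / b ^ α ≤ M c / c ^ α := hcmax ⟨hab, le_rfl⟩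
    _ ≤ M a / a ^ α := (le_div_iff₀ (Real.rpow_pos_of_pos ha α)).2 hKa

theorem stmt1_general (N : ℕ) (s : ℝ) (hs0 : 0 < s)
    (h2s : 2 * s < N) (M : ℝ → ℝ) (hMc : Continuous M)
    (hM6 : MonotoneOn (fun t => (∫ τ in (0:ℝ)..t, M τ) - (1 - 2 * s / (N:ℝ)) * M t * t)
      (Ici (0:ℝ))) :
    AntitoneOn (fun t => M t / t ^ (2 * s / ((N:ℝ) - 2 * s))) (Ioi (0:ℝ)) := by
  have hN0 : (0:ℝ) < N := by linarith
  have hNs : (0:ℝ) < N - 2 * s := by linarith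
  refine antitoneOn_div_rpow_of_monotoneOn hMc.continuousOn ?_ ?_ hM6
  · rw [sub_pos, div_lt_one hN0]
    exact h2s
  · field_simp
    ring

/-- (M6) implies (M5) for Kirchhoff functions. -/
theorem stmt1 (N : ℕ) (hN : 2 ≤ N) (s : ℝ) (hs0 : 0 < s) (hs1 : s < 1)
    (h2s : 2 * s < N) (M : ℝ → ℝ) (hMc : Continuous M)
    (hM0 : ∀ t ≥ (0:ℝ), 0 ≤ M t)
    (hM6 : MonotoneOn (fun t => (∫ τ in (0:ℝ)..t, M τ) - (1 - 2 * s / (N:ℝ)) * M t * t)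
      (Ici (0:ℝ))) :
    AntitoneOn (fun t => M t / t ^ (2 * s / ((N:ℝ) - 2 * s))) (Ioi (0:ℝ)) :=
  stmt1_general N s hs0 h2s M hMc hM6
end

section
/- Let $N \geq 2$, $s \in (0,1)$ with $2s < N$, let $M$ be continuous and nonnegative on $[0,\infty)$ satisfying that $t \mapsto M(t)/t^{2s/(N-2s)}$ is nonincreasing on $(0,\infty)$, and fix $a > 0$. Define $g(t) := \tfrac{1}{2}\widehat{M}(t^{N-2s} a) - t^N \cdot \tfrac{N-2s}{2N} M(a)\, a$ for $t > 0$, where $\widehat{M}(r) = \int_0^r M(\tau)\,d\tau$. Then $g'(t) \geq 0$ for all $t \in (0,1)$ and $g'(t) \leq 0$ for all $t \in (1,\infty)$; in particular $g(t) \leq g(1)$ for all $t > 0$. -/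
open MeasureTheory Set

/-!
By the fundamental theorem of calculus,
`g'(t) = (N-2s)/2 · a t^{N-2s-1} (M(t^{N-2s} a) - t^{2s} M(a))`.
Writing `u = t^{N-2s} a`, we have `t^{2s} = (u/a)^{2s/(N-2s)}`, so the bracket has the sign of
`M(u)/u^{2s/(N-2s)} - M(a)/a^{2s/(N-2s)}`; since this quotient is nonincreasing and `u ≤ a` iff
`t ≤ 1`, `g` increases on `(0,1]` and decreases on `[1,∞)`.
-/

noncomputable def fiberingMap (M : ℝ → ℝ) (n s a t : ℝ) : ℝ :=
  (1/2) * (∫ τ in (0:ℝ)..(t ^ (n - 2 * s) * a), M τ) - t ^ n * ((n - 2 * s) / (2 * n)) * (M a * a)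

lemma mul_rpow_le_of_antitoneOn_div_rpow_s3 {M : ℝ → ℝ} {r u v : ℝ}
    (hM : AntitoneOn (fun t => M t / t ^ r) (Ioi 0)) (hu : 0 < u) (huv : u ≤ v) :
    M v * u ^ r ≤ M u * v ^ r := by
  have hv : 0 < v := hu.trans_le huv
  have h := hM (mem_Ioi.2 hu) (mem_Ioi.2 hv) huv
  rwa [div_le_div_iff₀ (Real.rpow_pos_of_pos hv r) (Real.rpow_pos_of_pos hu r)] at h

lemma rpow_mul_rpow_div {p t a : ℝ} (q : ℝ) (hp : p ≠ 0) (ht : 0 < t) (ha : 0 < a) :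
    (t ^ p * a) ^ (q / p) = t ^ q * a ^ (q / p) := by
  rw [Real.mul_rpow (Real.rpow_nonneg ht.le p) ha.le, ← Real.rpow_mul ht.le, mul_div_cancel₀ q hp]

section Scaling

variable {M : ℝ → ℝ} {p q a t : ℝ}
  (hM : AntitoneOn (fun t => M t / t ^ (q / p)) (Ioi 0)) (hp : 0 < p) (ha : 0 < a) (ht : 0 < t)
include hM hp ha ht

lemma rpow_mul_le_apply_rpow_mul (ht1 : t ≤ 1) : t ^ q * M a ≤ M (t ^ p * a) := by
  have hu : 0 < t ^ p * a := by positivity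
  have hle : t ^ p * a ≤ a := mul_le_of_le_one_left ha.le (Real.rpow_le_one ht.le ht1 hp.le)
  have h := mul_rpow_le_of_antitoneOn_div_rpow_s3 hM hu hle
  rw [rpow_mul_rpow_div q hp.ne' ht ha] at h
  have hapow : 0 < a ^ (q / p) := Real.rpow_pos_of_pos ha _
  nlinarith

lemma apply_rpow_mul_le_rpow_mul (ht1 : 1 ≤ t) : M (t ^ p * a) ≤ t ^ q * M a := by
  have hle : a ≤ t ^ p * a := le_mul_of_one_le_left ha.le (Real.one_le_rpow ht1 hp.le)
  have h := mul_rpow_le_of_antitoneOn_div_rpow_s3 hM ha hle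
  rw [rpow_mul_rpow_div q hp.ne' ht ha] at h
  have hapow : 0 < a ^ (q / p) := Real.rpow_pos_of_pos ha _
  nlinarith

end Scaling

section FiberingMap

variable {M : ℝ → ℝ} {n s a t : ℝ}

lemma hasDerivAt_fiberingMap (hM : Continuous M) (hn : n ≠ 0) (ht : 0 < t) :
    HasDerivAt (fiberingMap M n s a)
      ((n - 2 * s) * a / 2 * t ^ (n - 2 * s - 1) * (M (t ^ (n - 2 * s) * a) - t ^ (2 * s) * M a))
      t := by
  have hprim : HasDerivAt (fun u => ∫ τ in (0:ℝ)..u, M τ) (M (t ^ (n - 2 * s) * a))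
      (t ^ (n - 2 * s) * a) :=
    intervalIntegral.integral_hasDerivAt_right (hM.intervalIntegrable _ _)
      (hM.stronglyMeasurableAtFilter _ _) hM.continuousAt
  have hinner : HasDerivAt (fun t => t ^ (n - 2 * s) * a)
      ((n - 2 * s) * t ^ (n - 2 * s - 1) * a) t :=
    (Real.hasDerivAt_rpow_const (Or.inl ht.ne')).mul_const a
  have hpow : HasDerivAt (fun t => t ^ n * ((n - 2 * s) / (2 * n)) * (M a * a))
      (n * t ^ (n - 1) * ((n - 2 * s) / (2 * n)) * (M a * a)) t :=
    ((Real.hasDerivAt_rpow_const (Or.inl ht.ne')).mul_const _).mul_const _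
  refine (((hprim.comp t hinner).const_mul (1/2)).sub hpow).congr_deriv ?_
  have hsplit : t ^ (n - 1) = t ^ (n - 2 * s - 1) * t ^ (2 * s) := by
    rw [← Real.rpow_add ht]; ring_nf
  rw [hsplit]
  field_simp

variable (hMc : Continuous M) (hM : AntitoneOn (fun t => M t / t ^ (2 * s / (n - 2 * s))) (Ioi 0))
  (hn : 0 < n) (h2s : 2 * s < n) (ha : 0 < a)
include hMc hM hn h2s ha

lemma deriv_fiberingMap_nonneg (ht : t ∈ Ioo 0 1) : 0 ≤ deriv (fiberingMap M n s a) t := by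
  have hp : 0 < n - 2 * s := by linarith
  rw [(hasDerivAt_fiberingMap hMc hn.ne' ht.1).deriv]
  have hbracket := sub_nonneg.2 (rpow_mul_le_apply_rpow_mul hM hp ha ht.1 ht.2.le)
  have htpow := Real.rpow_pos_of_pos ht.1 (n - 2 * s - 1)
  positivity

lemma deriv_fiberingMap_nonpos (ht : t ∈ Ioi 1) : deriv (fiberingMap M n s a) t ≤ 0 := by
  have hp : 0 < n - 2 * s := by linarith
  have ht0 : 0 < t := zero_lt_one.trans ht
  rw [(hasDerivAt_fiberingMap hMc hn.ne' ht0).deriv]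
  refine mul_nonpos_of_nonneg_of_nonpos ?_
    (sub_nonpos.2 (apply_rpow_mul_le_rpow_mul hM hp ha ht0 ht.le))
  have htpow := Real.rpow_pos_of_pos ht0 (n - 2 * s - 1)
  positivity

end FiberingMap

theorem stmt3_general (N : ℕ) (s : ℝ) (hs0 : 0 < s)
    (h2s : 2 * s < N) (M : ℝ → ℝ) (hMc : Continuous M)
    (hM5 : AntitoneOn (fun t => M t / t ^ (2 * s / ((N:ℝ) - 2 * s))) (Ioi (0:ℝ)))
    (a : ℝ) (ha : 0 < a) (g : ℝ → ℝ)
    (hg : ∀ t : ℝ, g t = (1/2) * (∫ τ in (0:ℝ)..(t ^ ((N:ℝ) - 2 * s) * a), M τ)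
      - t ^ (N:ℝ) * (((N:ℝ) - 2 * s) / (2 * (N:ℝ))) * (M a * a)) :
    (∀ t ∈ Ioo (0:ℝ) 1, 0 ≤ deriv g t) ∧ (∀ t ∈ Ioi (1:ℝ), deriv g t ≤ 0) ∧
    ∀ t : ℝ, 0 < t → g t ≤ g 1 := by
  have hN : (0:ℝ) < N := by linarith
  obtain rfl : g = fiberingMap M N s a := funext hg
  have hderiv {t : ℝ} (ht : 0 < t) := hasDerivAt_fiberingMap (s := s) (a := a) hMc hN.ne' ht
  have hinc := fun t ht => deriv_fiberingMap_nonneg (t := t) hMc hM5 hN h2s ha ht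
  have hdec := fun t ht => deriv_fiberingMap_nonpos (t := t) hMc hM5 hN h2s ha ht
  refine ⟨hinc, hdec, fun t ht => ?_⟩
  have hmax : IsMaxOn (fiberingMap M N s a) (Ioi 0) 1 :=
    isMaxOn_Ioi_of_deriv (hderiv one_pos).continuousAt
      (fun x hx => (hderiv hx.1).differentiableAt.differentiableWithinAt)
      (fun x hx => (hderiv (zero_lt_one.trans hx)).differentiableAt.differentiableWithinAt)
      hinc hdec
  exact hmax ht

/-- Fibering map: `t = 1` is a global maximum point of
`g(t) = ½ M̂(t^{N-2s} a) - t^N (N-2s)/(2N) M(a) a`. -/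
theorem stmt3 (N : ℕ) (hN : 2 ≤ N) (s : ℝ) (hs0 : 0 < s) (hs1 : s < 1)
    (h2s : 2 * s < N) (M : ℝ → ℝ) (hMc : Continuous M)
    (hM0 : ∀ t ≥ (0:ℝ), 0 ≤ M t)
    (hM5 : AntitoneOn (fun t => M t / t ^ (2 * s / ((N:ℝ) - 2 * s))) (Ioi (0:ℝ)))
    (a : ℝ) (ha : 0 < a) (g : ℝ → ℝ)
    (hg : ∀ t : ℝ, g t = (1/2) * (∫ τ in (0:ℝ)..(t ^ ((N:ℝ) - 2 * s) * a), M τ)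
      - t ^ (N:ℝ) * (((N:ℝ) - 2 * s) / (2 * (N:ℝ))) * (M a * a)) :
    (∀ t ∈ Ioo (0:ℝ) 1, 0 ≤ deriv g t) ∧ (∀ t ∈ Ioi (1:ℝ), deriv g t ≤ 0) ∧
    ∀ t : ℝ, 0 < t → g t ≤ g 1 :=
  stmt3_general N s hs0 h2s M hMc hM5 a ha g hg
end
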